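/- arXiv:2512.08601 — 3 statements merged into one kernel-verified Lean document; each statement's English description precedes it below -/
import Mathlib

section
/- Let (S, A, p, r) be a finite undiscounted MDP with a distinguished absorbing state s∞ satisfying p(s∞|s∞,a)=1 and r(s∞,a)=0 for all a, such that the state space admits a partition S = S₀ ⊔ S₁ ⊔ ⋯ ⊔ S_d ⊔ {s∞} with the property that for every l, every s ∈ S_l, and every action a, p(s'|s,a) > 0 only if s' ∈ S_{l+1} ⊔ ⋯ ⊔ S_d ⊔ {s∞}. Fix a strictly-positive decreasing sequence τ₀ ≥ τ₁ ≥ ⋯ ≥ τ_d ≥ τ∞ > 0, define τ(s) = τ_l for s ∈ S_l and τ(s∞) = τ∞, and let γ^τ = max over l of τ_{l+1}/τ_l (identifying index d+1 with ∞). Define the weighted sup-norm ‖V‖_∞^τ = max over s of |V(s)|/τ(s) on the space V_S⁰ of functions V : S → ℝ with V(s∞) = 0, and let B be the undiscounted Bellman map (BV)(s) = max over a of (r(s,a) + Σ_{s'} p(s'|s,a) V(s')). Then if γ^τ < 1, B maps V_S⁰ to itself and is a contraction of modulus γ^τ with respect to ‖·‖_∞^τ. -/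
/-!
A transition from a state of layer `l` lands in a layer `≥ l + 1` or in the absorbing state,
where two value functions vanishing at `s∞` agree. Since the weights decrease, such a successor
`s'` has `τ(s') ≤ τ_{l+1} ≤ γ τ_l`, so `|V(s') - W(s')| ≤ τ(s') ‖V - W‖ ≤ γ τ_l ‖V - W‖`.
Averaging over `p(·|s,a)` and taking the maximum over actions preserve this bound.
-/

open Finset

section SupBounds

variable {ι α : Type*} [AddCommGroup α] [LinearOrder α] [IsOrderedAddMonoid α]

theorem Finset.sup'_le_sup'_add {s : Finset ι} (hs : s.Nonempty) {f g : ι → α} {c : α}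
    (h : ∀ i ∈ s, f i ≤ g i + c) : s.sup' hs f ≤ s.sup' hs g + c :=
  sup'_le hs f fun i hi => (h i hi).trans (add_le_add_left (le_sup' g hi) c)

theorem Finset.abs_sup'_sub_sup'_le {s : Finset ι} (hs : s.Nonempty) {f g : ι → α} {c : α}
    (h : ∀ i ∈ s, |f i - g i| ≤ c) : |s.sup' hs f - s.sup' hs g| ≤ c := by
  rw [abs_sub_le_iff, sub_le_iff_le_add', sub_le_iff_le_add']
  refine ⟨sup'_le_sup'_add hs fun i hi => ?_, sup'_le_sup'_add hs fun i hi => ?_⟩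
  · exact sub_le_iff_le_add'.1 (abs_sub_le_iff.1 (h i hi)).1
  · exact sub_le_iff_le_add'.1 (abs_sub_le_iff.1 (h i hi)).2

end SupBounds

section WeightedSums

variable {ι : Type*} [Fintype ι] {w f g : ι → ℝ}

theorem abs_sum_mul_sub_sum_mul_le {c : ℝ} (hw0 : ∀ i, 0 ≤ w i) (hw1 : ∑ i, w i = 1)
    (h : ∀ i, 0 < w i → |f i - g i| ≤ c) :
    |∑ i, w i * f i - ∑ i, w i * g i| ≤ c := by
  have hterm : ∀ i, |w i * f i - w i * g i| ≤ w i * c := fun i => by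
    rw [← mul_sub, abs_mul, abs_of_nonneg (hw0 i)]
    rcases (hw0 i).eq_or_lt with hi | hi
    · simp [← hi]
    · exact mul_le_mul_of_nonneg_left (h i hi) hi.le
  calc |∑ i, w i * f i - ∑ i, w i * g i|
      = |∑ i, (w i * f i - w i * g i)| := by rw [sum_sub_distrib]
    _ ≤ ∑ i, w i * c := (abs_sum_le_sum_abs _ _).trans (sum_le_sum fun i _ => hterm i)
    _ = c := by rw [← sum_mul, hw1, one_mul]

theorem sum_mul_eq_of_eq_one {x : ι} (hw0 : ∀ i, 0 ≤ w i) (hw1 : ∑ i, w i = 1) (hx : w x = 1) :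
    ∑ i, w i * f i = f x := by
  classical
  have hrest : ∑ i ∈ univ.erase x, w i = 0 := by
    linarith [add_sum_erase univ w (mem_univ x)]
  have hzero : ∀ i, i ≠ x → w i = 0 := fun i hi =>
    (sum_eq_zero_iff_of_nonneg fun j _ => hw0 j).1 hrest i (mem_erase.2 ⟨hi, mem_univ i⟩)
  rw [sum_eq_single x (fun i _ hi => by rw [hzero i hi, zero_mul]) (by simp), hx, one_mul]

end WeightedSums

theorem abs_le_mul_sup'_abs_div {ι : Type*} [Fintype ι] [Nonempty ι] (u t : ι → ℝ) {i : ι}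
    (ht : 0 < t i) : |u i| ≤ t i * univ.sup' univ_nonempty fun j => |u j| / t j :=
  (div_le_iff₀' ht).1 (le_sup' (fun j => |u j| / t j) (mem_univ i))

section LayerWeights

variable {τ : ℕ → ℝ} {d : ℕ}

theorem antitoneOn_Iic_of_succ_le (hτdec : ∀ l, l ≤ d → τ (l + 1) ≤ τ l) :
    AntitoneOn τ (Set.Iic (d + 1)) :=
  antitoneOn_of_succ_le Set.ordConnected_Iic fun l _ _ hl => by
    rw [Order.succ_eq_add_one] at hl ⊢
    exact hτdec l (by simpa using hl)

theorem le_sup'_succ_div_mul_of_lt (hτpos : ∀ l, l ≤ d + 1 → 0 < τ l)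
    (hτdec : ∀ l, l ≤ d → τ (l + 1) ≤ τ l) {i j : ℕ} (hij : i < j) (hj : j ≤ d + 1) :
    τ j ≤ ((range (d + 1)).sup' nonempty_range_add_one fun l => τ (l + 1) / τ l) * τ i := by
  have hi : 0 < τ i := hτpos i (by omega)
  calc τ j ≤ τ (i + 1) :=
        antitoneOn_Iic_of_succ_le hτdec (Set.mem_Iic.2 (by omega)) (Set.mem_Iic.2 hj) hij
    _ = τ (i + 1) / τ i * τ i := (div_mul_cancel₀ _ hi.ne').symm
    _ ≤ _ := by
        gcongr
        exact le_sup' (fun l => τ (l + 1) / τ l) (mem_range.2 (by omega))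

end LayerWeights

section Bellman

variable {S A : Type*} [Fintype S] [Fintype A] [Nonempty A]

noncomputable def bellman (p : S → A → S → ℝ) (r : S → A → ℝ) (V : S → ℝ) (s : S) : ℝ :=
  univ.sup' univ_nonempty fun a => r s a + ∑ s', p s a s' * V s'

variable {p : S → A → S → ℝ} {r : S → A → ℝ}

theorem bellman_eq_self_of_absorbing {x : S} (hp0 : ∀ s a s', 0 ≤ p s a s')
    (hp1 : ∀ s a, ∑ s', p s a s' = 1) (habs : ∀ a, p x a x = 1) (hr : ∀ a, r x a = 0)
    (V : S → ℝ) : bellman p r V x = V x := by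
  have hterm : ∀ a, r x a + ∑ s', p x a s' * V s' = V x := fun a => by
    rw [hr a, zero_add, sum_mul_eq_of_eq_one (hp0 x a) (hp1 x a) (habs a)]
  simp only [bellman, hterm, sup'_const]

theorem abs_bellman_sub_le (hp0 : ∀ s a s', 0 ≤ p s a s') (hp1 : ∀ s a, ∑ s', p s a s' = 1)
    {V W : S → ℝ} {s : S} {c : ℝ} (h : ∀ a s', 0 < p s a s' → |V s' - W s'| ≤ c) :
    |bellman p r V s - bellman p r W s| ≤ c :=
  abs_sup'_sub_sup'_le _ fun a _ => by
    rw [add_sub_add_left_eq_sub]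
    exact abs_sum_mul_sub_sum_mul_le (hp0 s a) (hp1 s a) (h a)

end Bellman

/-- In a finite undiscounted MDP with absorbing zero-reward state `sInf`
and a layered state space (layer of `sInf` is `d+1`, other layers `≤ d`, transitions
strictly increase the layer), with strictly positive decreasing weights `τ` whose
maximal consecutive ratio `γ` is `< 1`, the undiscounted Bellman map preserves
`{V | V sInf = 0}` and is a `γ`-contraction in the `τ`-weighted sup-norm. -/
theorem stmt0
    {S A : Type} [Fintype S] [Fintype A] [Nonempty S] [Nonempty A]
    (p : S → A → S → ℝ) (r : S → A → ℝ) (sInf : S)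
    (d : ℕ) (lay : S → ℕ) (τ : ℕ → ℝ) (γ : ℝ)
    (hp0 : ∀ s a s', 0 ≤ p s a s')
    (hp1 : ∀ s a, ∑ s', p s a s' = 1)
    (habs : ∀ a, p sInf a sInf = 1)
    (hrInf : ∀ a, r sInf a = 0)
    (hlay : ∀ s, s ≠ sInf → lay s ≤ d)
    (hstep : ∀ s a s', s ≠ sInf → 0 < p s a s' → lay s < lay s')
    (hτpos : ∀ l, l ≤ d + 1 → 0 < τ l)
    (hτdec : ∀ l, l ≤ d → τ (l + 1) ≤ τ l)
    (hγdef : γ = (Finset.range (d + 1)).sup' (by simp) fun l => τ (l + 1) / τ l) :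
    (∀ V : S → ℝ, V sInf = 0 →
        (Finset.univ.sup' Finset.univ_nonempty fun a : A =>
          r sInf a + ∑ s', p sInf a s' * V s') = 0) ∧
    (∀ V W : S → ℝ, V sInf = 0 → W sInf = 0 →
        (Finset.univ.sup' Finset.univ_nonempty fun s : S =>
            |(Finset.univ.sup' Finset.univ_nonempty fun a : A =>
                r s a + ∑ s', p s a s' * V s') -
              (Finset.univ.sup' Finset.univ_nonempty fun a : A =>
                r s a + ∑ s', p s a s' * W s')| / τ (lay s)) ≤
          γ * Finset.univ.sup' Finset.univ_nonempty fun s : S => |V s - W s| / τ (lay s)) := by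
  have hfix := bellman_eq_self_of_absorbing hp0 hp1 habs hrInf (r := r)
  refine ⟨fun V hV => (hfix V).trans hV, fun V W hV hW => sup'_le _ _ fun s _ => ?_⟩
  set N := univ.sup' univ_nonempty fun s => |V s - W s| / τ (lay s)
  have hN : 0 ≤ N := le_sup'_of_le _ (mem_univ sInf) (by simp [hV, hW])
  have hγ : 0 ≤ γ := hγdef ▸ le_sup'_of_le _ (mem_range.2 d.succ_pos)
    (div_nonneg (hτpos 1 (by omega)).le (hτpos 0 (by omega)).le)
  by_cases hs : s = sInf
  · change |bellman p r V s - bellman p r W s| / _ ≤ _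
    rw [hs, hfix, hfix, hV, hW, sub_zero, abs_zero, zero_div]
    positivity
  have hτs : 0 < τ (lay s) := hτpos _ ((hlay s hs).trans d.le_succ)
  rw [div_le_iff₀ hτs]
  refine abs_bellman_sub_le hp0 hp1 fun a s' hp => ?_
  by_cases hs' : s' = sInf
  · simp only [hs', hV, hW, sub_zero, abs_zero]
    positivity
  have hlay' := hlay s' hs'
  calc |V s' - W s'| ≤ τ (lay s') * N :=
        abs_le_mul_sup'_abs_div (fun s => V s - W s) (fun s => τ (lay s)) (hτpos _ (by omega))
    _ ≤ γ * τ (lay s) * N := by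
        gcongr
        exact hγdef ▸ le_sup'_succ_div_mul_of_lt hτpos hτdec (hstep s a s' hs hp) (by omega)
    _ = γ * N * τ (lay s) := by ring
end

section
/- Let (V, ‖·‖) be a normed space, let B : V → V, let Π : V → V, and suppose the composition ΠB is a contraction of modulus γ < 1. Let V* be a fixed point of B (i.e., BV* = V*). Then ΠB has a unique fixed point Ṽ*, the iterates (ΠB)^t V₀ converge to Ṽ* for any V₀, and ‖Ṽ* − ΠV*‖ ≤ (γ/(1−γ)) · ‖V* − ΠV*‖. In particular, if ΠV* = V* then Ṽ* = V*. -/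
/-! Since `BV* = V*`, the point `ΠV*` is the first iterate of `ΠB` started at `V*`, so the
bound on `‖Ṽ* − ΠV*‖` is the one-step a priori estimate of Banach's fixed point theorem:
`‖Ṽ* − ΠV*‖ ≤ γ ‖V* − ΠV*‖ / (1 − γ)`. -/

open Function NNReal

theorem contractingWith_of_norm_sub_le {E : Type*} [NormedAddCommGroup E] {f : E → E}
    {K : ℝ≥0} (hK : K < 1) (h : ∀ x y, ‖f x - f y‖ ≤ K * ‖x - y‖) : ContractingWith K f :=
  ⟨hK, LipschitzWith.of_dist_le_mul fun x y => by simpa only [dist_eq_norm] using h x y⟩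

theorem ContractingWith.dist_apply_fixedPoint_le {α : Type*} [MetricSpace α] [Nonempty α]
    [CompleteSpace α] {K : ℝ≥0} {f : α → α} (hf : ContractingWith K f) (x : α) :
    dist (f x) (fixedPoint f hf) ≤ K / (1 - K) * dist x (f x) := by
  simpa only [iterate_one, pow_one, mul_div_right_comm, mul_comm (dist x (f x))]
    using hf.apriori_dist_iterate_fixedPoint_le x 1

/-- If `Π ∘ B` is a `γ`-contraction (`γ < 1`) on a complete normed space and
`V*` is a fixed point of `B`, then `Π ∘ B` has a unique fixed point `Ṽ*`, the iterates
`(ΠB)^t V₀` converge to `Ṽ*` for any `V₀`, and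
`‖Ṽ* − ΠV*‖ ≤ (γ/(1−γ))·‖V* − ΠV*‖`; in particular `ΠV* = V*` implies `Ṽ* = V*`. -/
theorem stmt3
    {V : Type*} [NormedAddCommGroup V] [CompleteSpace V]
    (B Pr : V → V) (γ : ℝ) (hγ0 : 0 ≤ γ) (hγ1 : γ < 1)
    (hcontr : ∀ x y, ‖Pr (B x) - Pr (B y)‖ ≤ γ * ‖x - y‖)
    (Vstar : V) (hfix : B Vstar = Vstar) :
    ∃ Vt : V, Pr (B Vt) = Vt ∧
      (∀ W, Pr (B W) = W → W = Vt) ∧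
      (∀ V0, Filter.Tendsto (fun t => (fun x => Pr (B x))^[t] V0) Filter.atTop (nhds Vt)) ∧
      ‖Vt - Pr Vstar‖ ≤ γ / (1 - γ) * ‖Vstar - Pr Vstar‖ ∧
      (Pr Vstar = Vstar → Vt = Vstar) := by
  set f : V → V := fun x => Pr (B x)
  have hf : ContractingWith ⟨γ, hγ0⟩ f :=
    contractingWith_of_norm_sub_le (K := ⟨γ, hγ0⟩) hγ1 hcontr
  have hfVstar : f Vstar = Pr Vstar := congrArg Pr hfix
  refine ⟨ContractingWith.fixedPoint f hf, hf.fixedPoint_isFixedPt,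
    fun W hW => hf.fixedPoint_unique hW, hf.tendsto_iterate_fixedPoint, ?_,
    fun hPr => (hf.fixedPoint_unique (hfVstar.trans hPr)).symm⟩
  have hbound := hf.dist_apply_fixedPoint_le Vstar
  rw [hfVstar, dist_comm (Pr Vstar), dist_eq_norm, dist_eq_norm] at hbound
  exact hbound
end

section
/- Let (V, ‖·‖) be a normed space, let T : V → V be a contraction of modulus γ < 1 with fixed point Ṽ*, and let (Ṽ_t) be a sequence in V whose one-step errors ε_t := ‖Ṽ_{t+1} − T Ṽ_t‖ satisfy ε_t → 0 as t → ∞. Then Ṽ_t → Ṽ* in norm. -/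
/-!
Writing `aₜ = ‖Ṽₜ - Ṽ*‖` and `εₜ` for the one-step error, the triangle inequality and the
contraction property give `aₜ₊₁ ≤ γ aₜ + εₜ`. Once `εₜ ≤ δ` from some index `N` on, unrolling this
recursion bounds `a_{N+k}` by `γᵏ a_N + δ / (1 - γ)`; the first term vanishes as `k → ∞` and the
second is as small as we like.
-/

open Filter Topology

theorem le_pow_mul_add_div_of_le_mul_add {a : ℕ → ℝ} {γ δ : ℝ} (hγ0 : 0 ≤ γ) (hγ1 : γ < 1)
    (hδ : 0 ≤ δ) (ha : ∀ n, a (n + 1) ≤ γ * a n + δ) (n : ℕ) :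
    a n ≤ γ ^ n * a 0 + δ / (1 - γ) := by
  have h1γ : 0 < 1 - γ := sub_pos.2 hγ1
  induction n with
  | zero => simpa using div_nonneg hδ h1γ.le
  | succ n ih =>
    calc a (n + 1) ≤ γ * a n + δ := ha n
      _ ≤ γ * (γ ^ n * a 0 + δ / (1 - γ)) + δ := by gcongr
      _ = γ ^ (n + 1) * a 0 + δ / (1 - γ) := by field_simp; ring

theorem tendsto_zero_of_le_mul_add {a e : ℕ → ℝ} {γ : ℝ} (hγ0 : 0 ≤ γ) (hγ1 : γ < 1)
    (ha0 : ∀ n, 0 ≤ a n) (ha : ∀ n, a (n + 1) ≤ γ * a n + e n)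
    (he : Tendsto e atTop (𝓝 0)) :
    Tendsto a atTop (𝓝 0) := by
  refine tendsto_order.2 ⟨fun b hb => .of_forall fun n => hb.trans_le (ha0 n), fun ε hε => ?_⟩
  have h1γ : 0 < 1 - γ := sub_pos.2 hγ1
  obtain ⟨N, hN⟩ := eventually_atTop.1 ((tendsto_order.1 he).2 ((1 - γ) * ε / 2) (by positivity))
  have hbound (k : ℕ) : a (N + k) ≤ γ ^ k * a N + ε / 2 := by
    have := le_pow_mul_add_div_of_le_mul_add (a := fun k => a (N + k)) (δ := (1 - γ) * ε / 2)
      hγ0 hγ1 (by positivity)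
      (fun k => (ha (N + k)).trans (by gcongr; exact (hN (N + k) (by omega)).le)) k
    rwa [add_zero, mul_div_assoc, mul_div_cancel_left₀ _ h1γ.ne'] at this
  have hgeom : ∀ᶠ k in atTop, γ ^ k * a N < ε / 2 :=
    ((tendsto_pow_atTop_nhds_zero_of_lt_one hγ0 hγ1).mul_const (a N)).eventually
      (gt_mem_nhds (by simpa using half_pos hε))
  filter_upwards [(tendsto_sub_atTop_nat N).eventually hgeom, eventually_ge_atTop N]
    with n hgeom_n hNn
  have := hbound (n - N)
  rw [Nat.add_sub_cancel' hNn] at this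
  linarith

/-- Inexact iteration of a `γ`-contraction (`γ < 1`) with fixed point `Vt`:
if the one-step errors `‖Ṽ_{t+1} − T Ṽ_t‖` tend to `0`, then `Ṽ_t → Vt` in norm. -/
theorem stmt4
    {V : Type*} [NormedAddCommGroup V]
    (T : V → V) (γ : ℝ) (hγ0 : 0 ≤ γ) (hγ1 : γ < 1)
    (hcontr : ∀ x y, ‖T x - T y‖ ≤ γ * ‖x - y‖)
    (Vt : V) (hfix : T Vt = Vt)
    (seq : ℕ → V)
    (herr : Filter.Tendsto (fun t => ‖seq (t + 1) - T (seq t)‖) Filter.atTop (nhds 0)) :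
    Filter.Tendsto seq Filter.atTop (nhds Vt) := by
  have hstep (t : ℕ) :
      ‖seq (t + 1) - Vt‖ ≤ γ * ‖seq t - Vt‖ + ‖seq (t + 1) - T (seq t)‖ :=
    calc ‖seq (t + 1) - Vt‖ ≤ ‖seq (t + 1) - T (seq t)‖ + ‖T (seq t) - T Vt‖ := by
          simpa only [hfix] using norm_sub_le_norm_sub_add_norm_sub _ (T (seq t)) Vt
      _ ≤ ‖seq (t + 1) - T (seq t)‖ + γ * ‖seq t - Vt‖ := by gcongr; exact hcontr _ _
      _ = γ * ‖seq t - Vt‖ + ‖seq (t + 1) - T (seq t)‖ := add_comm _ _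
  exact tendsto_iff_norm_sub_tendsto_zero.2
    (tendsto_zero_of_le_mul_add hγ0 hγ1 (fun t => norm_nonneg _) hstep herr)
end
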